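/- Let Σ be a finite alphabet and let L ⊆ Σ* be a bounded language. Then L is well-quasi-ordered by the infix relation if and only if there exist n ∈ ℕ and sets S₁, …, S_n, P₁, …, P_n ⊆ Σ* such that each S_i is a chain for the suffix relation, each P_i is a chain for the prefix relation, and L ⊆ ⋃_{i=1}^n S_i·P_i. -/

import Mathlib

/-- The `p`-fold concatenation of the word `x`. -/
def wpow {A : Type*} (x : List A) (p : ℕ) : List A := (List.replicate p x).flatten

/-- A subset `L` of words is well-quasi-ordered by the relation `r`. -/
def IsWqoOn {A : Type*} (L : Set (List A)) (r : List A → List A → Prop) : Prop :=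
  ∀ f : ℕ → List A, (∀ n, f n ∈ L) → ∃ i j, i < j ∧ r (f i) (f j)

/-- A chain for the relation `r`: any two elements are comparable. -/
def IsChainFor {A : Type*} (C : Set (List A)) (r : List A → List A → Prop) : Prop :=
  ∀ u ∈ C, ∀ v ∈ C, r u v ∨ r v u

/-- A language is bounded if it is contained in `w₁* ⋯ w_n*` for some words `wᵢ`. -/
def IsBoundedLang {A : Type*} (L : Set (List A)) : Prop :=
  ∃ (n : ℕ) (w : Fin n → List A), ∀ u ∈ L, ∃ c : Fin n → ℕ,
    u = (List.ofFn fun i : Fin n => wpow (w i) (c i)).flatten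


/-!
A product `S·P` of a suffix chain and a prefix chain is well-quasi-ordered by the infix relation:
inside a chain the order is decided by length, and Dickson's lemma applies to the pair of lengths.

Conversely, a well-quasi-ordered set is a finite union of directed subsets. A directed subset of
`w₁* ⋯ wₙ*` has a cofinal infix chain; along a subsequence of it the exponent vectors increase, so
each block `wᵢ ^ cᵢ` either stabilises or outgrows every bound. Hence every element `u` of the
directed set is an infix of a word made of fixed blocks and powers longer than `u`. Such an infix is
an infix of a single block, or a suffix of one block followed by a short prefix of the rest, which
is a prefix of the fixed blocks up to the next power `z` followed by a power of `z`: finitely many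
chain products cover all of these.
-/

open Filter Set

section Words

variable {A : Type*}

theorem wpow_succ (x : List A) (p : ℕ) : wpow x (p + 1) = x ++ wpow x p := by
  simp [wpow, List.replicate_succ]

theorem wpow_add (x : List A) (p q : ℕ) : wpow x (p + q) = wpow x p ++ wpow x q := by
  rw [wpow, List.replicate_add, List.flatten_append]; rfl

theorem wpow_one (x : List A) : wpow x 1 = x := by
  simp [wpow]

theorem wpow_nil (p : ℕ) : wpow ([] : List A) p = [] := by
  simp [wpow]

theorem length_wpow (x : List A) (p : ℕ) : (wpow x p).length = p * x.length := by
  simp [wpow]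

theorem wpow_prefix_wpow (x : List A) {p q : ℕ} (h : p ≤ q) : wpow x p <+: wpow x q := by
  obtain ⟨d, rfl⟩ := Nat.exists_eq_add_of_le h
  exact ⟨wpow x d, (wpow_add x p d).symm⟩

theorem wpow_suffix_wpow (x : List A) {p q : ℕ} (h : p ≤ q) : wpow x p <:+ wpow x q := by
  obtain ⟨d, rfl⟩ := Nat.exists_eq_add_of_le h
  exact ⟨wpow x d, by rw [Nat.add_comm, wpow_add]⟩

theorem List.prefix_or_of_prefix_append {p a x : List A} (h : p <+: a ++ x) :
    p <+: a ∨ ∃ p', p = a ++ p' ∧ p' <+: x := by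
  rcases le_total p.length a.length with hl | hl
  · exact Or.inl (List.prefix_of_prefix_length_le h (List.prefix_append a x) hl)
  · obtain ⟨p', rfl⟩ := List.prefix_of_prefix_length_le (List.prefix_append a x) h hl
    exact Or.inr ⟨p', rfl, (List.prefix_append_right_inj a).1 h⟩

theorem List.IsSuffix.append_infix_append {s s' p p' : List A} (hs : s <:+ s') (hp : p <+: p') :
    s ++ p <:+: s' ++ p' := by
  obtain ⟨x, rfl⟩ := hs
  obtain ⟨y, rfl⟩ := hp
  exact ⟨x, y, by simp⟩

end Words

section Chains

variable {A : Type*}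

theorem isChainFor_prefix_of_prefix_mono {x : ℕ → List A}
    (hx : ∀ ⦃k m⦄, k ≤ m → x k <+: x m) : IsChainFor {p | ∃ k, p <+: x k} (· <+: ·) := by
  rintro p ⟨k, hk⟩ q ⟨m, hm⟩
  rcases le_total k m with h | h
  · exact List.prefix_or_prefix_of_prefix (hk.trans (hx h)) hm
  · exact List.prefix_or_prefix_of_prefix hk (hm.trans (hx h))

theorem isChainFor_suffix_of_suffix_mono {x : ℕ → List A}
    (hx : ∀ ⦃k m⦄, k ≤ m → x k <:+ x m) : IsChainFor {s | ∃ k, s <:+ x k} (· <:+ ·) := by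
  rintro s ⟨k, hk⟩ t ⟨m, hm⟩
  rcases le_total k m with h | h
  · exact List.suffix_or_suffix_of_suffix (hk.trans (hx h)) hm
  · exact List.suffix_or_suffix_of_suffix hk (hm.trans (hx h))

theorem IsChainFor.prefix_of_length_le {P : Set (List A)} (hP : IsChainFor P (· <+: ·))
    {p q : List A} (hp : p ∈ P) (hq : q ∈ P) (hl : p.length ≤ q.length) : p <+: q := by
  rcases hP p hp q hq with h | h
  · exact h
  · rw [h.eq_of_length (le_antisymm h.length_le hl)]

theorem IsChainFor.suffix_of_length_le {S : Set (List A)} (hS : IsChainFor S (· <:+ ·))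
    {s t : List A} (hs : s ∈ S) (ht : t ∈ S) (hl : s.length ≤ t.length) : s <:+ t := by
  rcases hS s hs t ht with h | h
  · exact h
  · rw [h.eq_of_length (le_antisymm h.length_le hl)]

end Chains

section ChainProducts

variable {A : Type*}

def CoveredByChainProducts (T : Set (List A)) : Prop :=
  ∃ C : Set (Set (List A) × Set (List A)), C.Finite ∧
    (∀ SP ∈ C, IsChainFor SP.1 (· <:+ ·) ∧ IsChainFor SP.2 (· <+: ·)) ∧
    T ⊆ ⋃ SP ∈ C, image2 (· ++ ·) SP.1 SP.2

theorem partiallyWellOrderedOn_image2_append {S P : Set (List A)} (hS : IsChainFor S (· <:+ ·))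
    (hP : IsChainFor P (· <+: ·)) : (image2 (· ++ ·) S P).PartiallyWellOrderedOn (· <:+: ·) := by
  rw [partiallyWellOrderedOn_iff_exists_lt]
  intro f hf
  choose a ha b hb hab using hf
  obtain ⟨i, j, hij, hl⟩ := wellQuasiOrdered_le fun k => ((a k).length, (b k).length)
  refine ⟨i, j, hij, ?_⟩
  rw [← hab i, ← hab j]
  exact (hS.suffix_of_length_le (ha i) (ha j) hl.1).append_infix_append
    (hP.prefix_of_length_le (hb i) (hb j) hl.2)

namespace CoveredByChainProducts

variable {T T' : Set (List A)}

theorem mono (h : CoveredByChainProducts T) (hT : T' ⊆ T) : CoveredByChainProducts T' :=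
  let ⟨C, hC, hch, hcov⟩ := h
  ⟨C, hC, hch, hT.trans hcov⟩

theorem image2_append {S P : Set (List A)} (hS : IsChainFor S (· <:+ ·))
    (hP : IsChainFor P (· <+: ·)) : CoveredByChainProducts (image2 (· ++ ·) S P) :=
  ⟨{(S, P)}, finite_singleton _, by simp [hS, hP], by simp⟩

theorem union (h : CoveredByChainProducts T) (h' : CoveredByChainProducts T') :
    CoveredByChainProducts (T ∪ T') := by
  obtain ⟨C, hC, hch, hcov⟩ := h
  obtain ⟨C', hC', hch', hcov'⟩ := h'
  refine ⟨C ∪ C', hC.union hC', fun SP hSP => hSP.elim (hch SP) (hch' SP), ?_⟩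
  rw [biUnion_union]
  exact union_subset_union hcov hcov'

theorem biUnion {ι : Type*} {I : Set ι} (hI : I.Finite) {T : ι → Set (List A)}
    (h : ∀ i ∈ I, CoveredByChainProducts (T i)) : CoveredByChainProducts (⋃ i ∈ I, T i) := by
  choose! C hC hch hcov using h
  refine ⟨⋃ i ∈ I, C i, hI.biUnion hC, ?_, ?_⟩
  · simp only [mem_iUnion₂]
    rintro SP ⟨i, hi, hSP⟩
    exact hch i hi SP hSP
  · intro u hu
    obtain ⟨i, hi, hu⟩ := mem_iUnion₂.1 hu
    obtain ⟨SP, hSP, hu⟩ := mem_iUnion₂.1 (hcov i hi hu)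
    exact mem_iUnion₂.2 ⟨SP, mem_iUnion₂.2 ⟨i, hi, hSP⟩, hu⟩

theorem of_finite (hT : T.Finite) : CoveredByChainProducts T := by
  refine (biUnion hT fun u _ => image2_append (S := {u}) (P := {[]}) ?_ ?_).mono ?_
  · simp [IsChainFor]
  · simp [IsChainFor]
  · intro u hu
    exact mem_biUnion hu ⟨u, rfl, [], rfl, List.append_nil u⟩

theorem exists_fin (h : CoveredByChainProducts T) :
    ∃ (n : ℕ) (S P : Fin n → Set (List A)),
      (∀ i, IsChainFor (S i) (· <:+ ·)) ∧
      (∀ i, IsChainFor (P i) (· <+: ·)) ∧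
      T ⊆ ⋃ i, image2 (· ++ ·) (S i) (P i) := by
  obtain ⟨C, hC, hch, hcov⟩ := h
  obtain ⟨n, f, rfl⟩ := hC.fin_embedding
  refine ⟨n, fun i => (f i).1, fun i => (f i).2, fun i => (hch _ ⟨i, rfl⟩).1,
    fun i => (hch _ ⟨i, rfl⟩).2, fun u hu => ?_⟩
  obtain ⟨_, ⟨i, rfl⟩, hu⟩ := mem_iUnion₂.1 (hcov hu)
  exact mem_iUnion.2 ⟨i, hu⟩

end CoveredByChainProducts

end ChainProducts

section BlockPatterns

variable {A : Type*}

theorem finite_setOf_infix (a : List A) : {u | u <:+: a}.Finite :=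
  (List.finite_toSet a.sublists).subset fun _ hu => List.mem_sublists.2 hu.sublist

theorem coveredByChainProducts_infixes_wpow (z : List A) :
    CoveredByChainProducts {u | ∃ k, u <:+: wpow z k} := by
  refine ((CoveredByChainProducts.of_finite (finite_setOf_infix z)).union
    (CoveredByChainProducts.image2_append
      (isChainFor_suffix_of_suffix_mono fun _ _ => wpow_suffix_wpow z)
      (isChainFor_prefix_of_prefix_mono fun _ _ => wpow_prefix_wpow z))).mono ?_
  rintro u ⟨k, hu⟩
  induction k with
  | zero => exact Or.inl ((List.eq_nil_of_infix_nil hu).symm ▸ List.nil_infix)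
  | succ k ih =>
    rw [wpow_succ] at hu
    rcases List.infix_append_iff.1 hu with hz | hk | ⟨s, p, rfl, hs, hp⟩
    · exact Or.inl hz
    · exact ih hk
    · exact Or.inr ⟨s, ⟨1, by rwa [wpow_one]⟩, p, ⟨k, hp⟩, rfl⟩

/-- In a block pattern, `inl a` stands for the fixed word `a` and `inr z` for some power of `z`.
A word `x` fits a power block with bound `b` only if it is longer than `b`. -/
def BlockFits (b : ℕ) : List A ⊕ List A → List A → Prop
  | .inl a, x => x = a
  | .inr z, x => ∃ c, x = wpow z c ∧ b < x.length

def blockWord : List A ⊕ List A → ℕ → List A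
  | .inl a, _ => a
  | .inr z, k => wpow z k

theorem BlockFits.exists_eq_blockWord {b : ℕ} {t : List A ⊕ List A} {x : List A}
    (h : BlockFits b t x) : ∃ k, x = blockWord t k := by
  cases t with
  | inl a => exact ⟨0, h⟩
  | inr z => exact h.imp fun _ hc => hc.1

theorem isChainFor_blockSuffixes (t : List A ⊕ List A) :
    IsChainFor {s | ∃ k, s <:+ blockWord t k} (· <:+ ·) := by
  refine isChainFor_suffix_of_suffix_mono fun k m hkm => ?_
  cases t with
  | inl a => exact List.suffix_refl a
  | inr z => exact wpow_suffix_wpow z hkm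

theorem coveredByChainProducts_blockInfixes (t : List A ⊕ List A) :
    CoveredByChainProducts {u | ∃ k, u <:+: blockWord t k} := by
  cases t with
  | inl a =>
    exact CoveredByChainProducts.of_finite ((finite_setOf_infix a).subset fun _ ⟨_, hu⟩ => hu)
  | inr z => exact coveredByChainProducts_infixes_wpow z

/-- The fixed blocks of a pattern up to its first power block `z`, followed by `z ^ k`. -/
def leadingWord : List (List A ⊕ List A) → ℕ → List A
  | [], _ => []
  | .inl a :: l, k => a ++ leadingWord l k
  | .inr z :: _, k => wpow z k

theorem isChainFor_leadingPrefixes (l : List (List A ⊕ List A)) :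
    IsChainFor {p | ∃ k, p <+: leadingWord l k} (· <+: ·) := by
  refine isChainFor_prefix_of_prefix_mono fun k m hkm => ?_
  induction l with
  | nil => exact List.nil_prefix
  | cons t l ih =>
    cases t with
    | inl a => exact (List.prefix_append_right_inj a).2 ih
    | inr z => exact wpow_prefix_wpow z hkm

theorem exists_prefix_leadingWord {b : ℕ} {l : List (List A ⊕ List A)} {xs : List (List A)}
    (hl : List.Forall₂ (BlockFits b) l xs) {p : List A} (hp : p <+: xs.flatten)
    (hpb : p.length ≤ b) : ∃ k, p <+: leadingWord l k := by
  induction hl generalizing p with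
  | nil => exact ⟨0, hp⟩
  | @cons t x l xs hx _ ih =>
    rw [List.flatten_cons] at hp
    cases t with
    | inl a =>
      obtain rfl : x = a := hx
      rcases List.prefix_or_of_prefix_append hp with hpa | ⟨p', rfl, hp'⟩
      · exact ⟨0, List.prefix_append_of_prefix hpa⟩
      · obtain ⟨k, hk⟩ := ih hp' (by simp at hpb; omega)
        exact ⟨k, (List.prefix_append_right_inj x).2 hk⟩
    | inr z =>
      obtain ⟨c, rfl, hc⟩ := hx
      exact ⟨c, show p <+: wpow z c from
        List.prefix_of_prefix_length_le hp (List.prefix_append _ _) (by omega)⟩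

def shortInfixes (l : List (List A ⊕ List A)) : Set (List A) :=
  {u | ∃ xs, List.Forall₂ (BlockFits u.length) l xs ∧ u <:+: xs.flatten}

theorem coveredByChainProducts_shortInfixes (l : List (List A ⊕ List A)) :
    CoveredByChainProducts (shortInfixes l) := by
  induction l with
  | nil =>
    refine (CoveredByChainProducts.of_finite (finite_singleton [])).mono ?_
    rintro u ⟨xs, hxs, hu⟩
    rw [List.forall₂_nil_left_iff.1 hxs] at hu
    exact List.eq_nil_of_infix_nil hu
  | cons t l ih =>
    refine (((coveredByChainProducts_blockInfixes t).union ih).union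
      (CoveredByChainProducts.image2_append (isChainFor_blockSuffixes t)
        (isChainFor_leadingPrefixes l))).mono ?_
    rintro u ⟨_, hl, hu⟩
    obtain ⟨x, xs, hx, hxs, rfl⟩ := List.forall₂_cons_left_iff.1 hl
    obtain ⟨k, rfl⟩ := hx.exists_eq_blockWord
    rw [List.flatten_cons] at hu
    rcases List.infix_append_iff.1 hu with hx | hxs' | ⟨s, p, rfl, hs, hp⟩
    · exact Or.inl (Or.inl ⟨k, hx⟩)
    · exact Or.inl (Or.inr ⟨xs, hxs, hxs'⟩)
    · exact Or.inr ⟨s, ⟨k, hs⟩, p, exists_prefix_leadingWord hxs hp (by simp), rfl⟩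

end BlockPatterns

section WellQuasiOrders

variable {α : Type*} {r : α → α → Prop}

theorem DirectedOn.exists_seq_cofinal [IsTrans α r] {D : Set α} (hD : DirectedOn r D)
    (hc : D.Countable) (hne : D.Nonempty) :
    ∃ d : ℕ → α, (∀ k, d k ∈ D) ∧ (∀ ⦃i j⦄, i < j → r (d i) (d j)) ∧ ∀ x ∈ D, ∃ k, r x (d k) := by
  obtain ⟨f, rfl⟩ := hc.exists_eq_range hne
  choose! ub hub using hD
  let d : ℕ → α := fun k => Nat.rec (ub (f 0) (f 0)) (fun k dk => ub dk (f (k + 1))) k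
  have hd : ∀ k, d k ∈ range f ∧ r (f k) (d k) := by
    intro k
    induction k with
    | zero => exact ⟨(hub _ ⟨0, rfl⟩ _ ⟨0, rfl⟩).1, (hub _ ⟨0, rfl⟩ _ ⟨0, rfl⟩).2.1⟩
    | succ k ih => exact ⟨(hub _ ih.1 _ ⟨k + 1, rfl⟩).1, (hub _ ih.1 _ ⟨k + 1, rfl⟩).2.2⟩
  refine ⟨d, fun k => (hd k).1,
    Nat.rel_of_forall_rel_succ_of_lt r fun k => (hub _ (hd k).1 _ ⟨k + 1, rfl⟩).2.1, ?_⟩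
  rintro _ ⟨k, rfl⟩
  exact ⟨k, (hd k).2⟩

def IsFiniteDirectedUnion (r : α → α → Prop) (s : Set α) : Prop :=
  ∃ 𝒟 : Set (Set α), 𝒟.Finite ∧ (∀ D ∈ 𝒟, DirectedOn r D) ∧ ⋃₀ 𝒟 = s

theorem IsFiniteDirectedUnion.union {s t : Set α} (hs : IsFiniteDirectedUnion r s)
    (ht : IsFiniteDirectedUnion r t) : IsFiniteDirectedUnion r (s ∪ t) := by
  obtain ⟨𝒟, h𝒟, hdir, rfl⟩ := hs
  obtain ⟨ℰ, hℰ, hdir', rfl⟩ := ht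
  exact ⟨𝒟 ∪ ℰ, h𝒟.union hℰ, fun D hD => hD.elim (hdir D) (hdir' D), sUnion_union 𝒟 ℰ⟩

/-- If `s` is not directed, two elements `a, b` without common upper bound in `s` split it into
`{x ∈ s | ¬ r a x}` and `{x ∈ s | ¬ r b x}`, so one of these pieces is as bad as `s`. -/
theorem exists_mem_not_isFiniteDirectedUnion_sep {s : Set α}
    (hs : ¬ IsFiniteDirectedUnion r s) :
    ∃ c ∈ s, ¬ IsFiniteDirectedUnion r {x ∈ s | ¬ r c x} := by
  have hnd : ¬ DirectedOn r s := fun hd =>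
    hs ⟨{s}, finite_singleton s, by simpa using hd, sUnion_singleton s⟩
  simp only [DirectedOn, not_forall, not_exists, not_and] at hnd
  obtain ⟨a, ha, b, hb, hab⟩ := hnd
  by_contra! hgood
  have hsplit : {x ∈ s | ¬ r a x} ∪ {x ∈ s | ¬ r b x} = s := by
    refine Subset.antisymm (union_subset (sep_subset _ _) (sep_subset _ _)) fun x hx => ?_
    by_cases hax : r a x
    · exact Or.inr ⟨hx, hab x hx hax⟩
    · exact Or.inl ⟨hx, hax⟩
  exact hs (hsplit ▸ (hgood a ha).union (hgood b hb))

/-- From a counterexample, repeatedly splitting off a piece as in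
`exists_mem_not_isFiniteDirectedUnion_sep` yields `c₀, c₁, …` with `¬ r cᵢ cⱼ` for `i < j`. -/
theorem Set.PartiallyWellOrderedOn.isFiniteDirectedUnion {s : Set α}
    (hs : s.PartiallyWellOrderedOn r) : IsFiniteDirectedUnion r s := by
  by_contra hbad
  have : Nonempty α := ⟨(exists_mem_not_isFiniteDirectedUnion_sep hbad).choose⟩
  choose! c hc hsep using
    fun t : Set α => exists_mem_not_isFiniteDirectedUnion_sep (r := r) (s := t)
  let seq : ℕ → Set α := fun n => (fun t => {x ∈ t | ¬ r (c t) x})^[n] s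
  have hseq_succ : ∀ n, seq (n + 1) = {x ∈ seq n | ¬ r (c (seq n)) x} := fun n =>
    Function.iterate_succ_apply' _ n s
  have hseq_bad : ∀ n, ¬ IsFiniteDirectedUnion r (seq n) := by
    intro n
    induction n with
    | zero => exact hbad
    | succ n ih => rw [hseq_succ]; exact hsep _ ih
  have hanti : Antitone seq :=
    antitone_nat_of_succ_le fun n => by rw [hseq_succ]; exact sep_subset _ _
  have hmem : ∀ n, c (seq n) ∈ seq n := fun n => hc _ (hseq_bad n)
  obtain ⟨i, j, hij, hr⟩ := hs.exists_lt fun n => hanti (Nat.zero_le n) (hmem n)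
  have hj : c (seq j) ∈ seq (i + 1) := hanti hij (hmem j)
  rw [hseq_succ] at hj
  exact hj.2 hr

theorem Set.partiallyWellOrderedOn_iUnion {ι : Type*} [Finite ι] {s : ι → Set α}
    (h : ∀ i, (s i).PartiallyWellOrderedOn r) : (⋃ i, s i).PartiallyWellOrderedOn r := by
  classical
  have := Fintype.ofFinite ι
  suffices ∀ I : Finset ι, (⋃ i ∈ I, s i).PartiallyWellOrderedOn r by simpa using this Finset.univ
  intro I
  induction I using Finset.induction_on with
  | empty => simp
  | insert i I _ ih => rw [Finset.set_biUnion_insert]; exact (h i).union ih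

theorem Monotone.eventually_const_or_tendsto_atTop {f : ℕ → ℕ} (hf : Monotone f) :
    (∃ V, ∀ᶠ k in atTop, f k = V) ∨ Tendsto f atTop atTop := by
  by_cases hb : BddAbove (range f)
  · have := tendsto_atTop_ciSup hf hb
    rw [nhds_discrete, tendsto_pure] at this
    exact Or.inl ⟨_, this⟩
  · refine Or.inr (tendsto_atTop_atTop_of_monotone hf fun b => ?_)
    obtain ⟨_, ⟨k, rfl⟩, hk⟩ := not_bddAbove_iff.1 hb b
    exact ⟨k, hk.le⟩

end WellQuasiOrders

section BoundedLanguages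

variable {A : Type*}

def powProduct {n : ℕ} (w : Fin n → List A) (c : Fin n → ℕ) : List A :=
  (List.ofFn fun i => wpow (w i) (c i)).flatten

theorem exists_blockFits_eventually (z : List A) {f : ℕ → ℕ} (hf : Monotone f) :
    ∃ t, ∀ b, ∀ᶠ k in atTop, BlockFits b t (wpow z (f k)) := by
  rcases hf.eventually_const_or_tendsto_atTop with ⟨V, hV⟩ | htop
  · exact ⟨.inl (wpow z V), fun _ => hV.mono fun k hk => congrArg (wpow z) hk⟩
  rcases eq_or_ne z [] with rfl | hz
  · exact ⟨.inl [], fun _ => Eventually.of_forall fun _ => wpow_nil _⟩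
  refine ⟨.inr z, fun b => (htop.eventually_gt_atTop b).mono fun k hk => ⟨f k, rfl, ?_⟩⟩
  rw [length_wpow]
  have := List.length_pos_iff.2 hz
  nlinarith

theorem coveredByChainProducts_of_directedOn {n : ℕ} {w : Fin n → List A} {D : Set (List A)}
    (hD : D ⊆ range (powProduct w)) (hdir : DirectedOn (· <:+: ·) D) :
    CoveredByChainProducts D := by
  rcases D.eq_empty_or_nonempty with rfl | hne
  · exact CoveredByChainProducts.of_finite finite_empty
  obtain ⟨d, hdD, hd_mono, hd_cofinal⟩ :=
    hdir.exists_seq_cofinal ((countable_range _).mono hD) hne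
  choose e he using fun k => hD (hdD k)
  obtain ⟨g, hg⟩ := wellQuasiOrdered_le.exists_monotone_subseq e
  choose t ht using fun i =>
    exists_blockFits_eventually (w i) (f := fun k => e (g k) i) fun _ _ hkm => hg _ _ hkm i
  refine (coveredByChainProducts_shortInfixes (List.ofFn t)).mono fun u hu => ?_
  obtain ⟨k₀, hk₀⟩ := hd_cofinal u hu
  obtain ⟨k, hk, hfits⟩ := ((g.strictMono.tendsto_atTop.eventually_gt_atTop k₀).and
    (eventually_all.2 fun i => ht i u.length)).exists
  refine ⟨List.ofFn fun i => wpow (w i) (e (g k) i), ?_,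
    show u <:+: powProduct w (e (g k)) from (he (g k)).symm ▸ hk₀.trans (hd_mono hk)⟩
  exact List.forall₂_iff_get.2 ⟨by simp, fun i h₁ _ => by simpa using hfits ⟨i, by simpa using h₁⟩⟩

theorem coveredByChainProducts_of_partiallyWellOrderedOn {n : ℕ} {w : Fin n → List A}
    {L : Set (List A)} (hL : L ⊆ range (powProduct w))
    (hwqo : L.PartiallyWellOrderedOn (· <:+: ·)) : CoveredByChainProducts L := by
  obtain ⟨𝒟, h𝒟, hdir, rfl⟩ := hwqo.isFiniteDirectedUnion
  rw [sUnion_eq_biUnion]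
  exact .biUnion h𝒟 fun D hD =>
    coveredByChainProducts_of_directedOn ((subset_sUnion_of_mem hD).trans hL) (hdir D hD)

end BoundedLanguages

theorem bounded_wqo_infix_iff_union_suffix_prefix_chains_general
    {A : Type*} (L : Set (List A)) (hbd : IsBoundedLang L) :
    IsWqoOn L (· <:+: ·)
    ↔
    ∃ (n : ℕ) (S P : Fin n → Set (List A)),
      (∀ i, IsChainFor (S i) (· <:+ ·)) ∧
      (∀ i, IsChainFor (P i) (· <+: ·)) ∧
      L ⊆ ⋃ i, {w | ∃ a ∈ S i, ∃ b ∈ P i, w = a ++ b} := by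
  obtain ⟨n, w, hL⟩ := hbd
  have hprod (S P : Set (List A)) : {w | ∃ a ∈ S, ∃ b ∈ P, w = a ++ b} = image2 (· ++ ·) S P := by
    ext; simp [eq_comm]
  simp only [IsWqoOn, ← partiallyWellOrderedOn_iff_exists_lt, hprod]
  constructor
  · exact fun hwqo => (coveredByChainProducts_of_partiallyWellOrderedOn
      (fun u hu => (hL u hu).imp fun _ hc => hc.symm) hwqo).exists_fin
  · rintro ⟨m, S, P, hS, hP, hLSP⟩
    exact (partiallyWellOrderedOn_iUnion fun i =>
      partiallyWellOrderedOn_image2_append (hS i) (hP i)).mono hLSP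

/-- A bounded language is well-quasi-ordered by the infix relation
iff it is contained in a finite union of products `Sᵢ·Pᵢ` of a chain `Sᵢ` for the
suffix relation with a chain `Pᵢ` for the prefix relation. -/
theorem bounded_wqo_infix_iff_union_suffix_prefix_chains
    {A : Type*} [Fintype A] (L : Set (List A)) (hbd : IsBoundedLang L) :
    IsWqoOn L (· <:+: ·)
    ↔
    ∃ (n : ℕ) (S P : Fin n → Set (List A)),
      (∀ i, IsChainFor (S i) (· <:+ ·)) ∧
      (∀ i, IsChainFor (P i) (· <+: ·)) ∧
      L ⊆ ⋃ i, {w | ∃ a ∈ S i, ∃ b ∈ P i, w = a ++ b} :=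
  bounded_wqo_infix_iff_union_suffix_prefix_chains_general L hbd
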